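/- arXiv:0902.1357 — 2 statements merged into one kernel-verified Lean document; each statement's English description precedes it below -/
import Mathlib

section
/- Let M be a ℤ-module, ι : M → M ⊗_ℚ the natural map, A a sub-semigroup of M, and f : A → ℝ a function such that there is a positive real e with f(n·a) = n^e·f(a) for all positive integers n and all a ∈ A. Then there exists a unique function f̃ : Cone_ℚ(ι(A)) → ℝ with f̃ ∘ ι = f on A, and f̃(λ·x) = λ^e·f̃(x) for all positive rationals λ and all x ∈ Cone_ℚ(ι(A)). -/
/-!
Every point of the rational cone over `A` has the form `q⁻¹ • (1 ⊗ₜ d)` with `q > 0` and `d ∈ A`,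
and homogeneity leaves `f d / q ^ e` as the only possible value there. This value is well defined
because the kernel of `M → ℚ ⊗[ℤ] M` is the torsion of `M`: two representations become equal in
`M` after multiplying by some `k > 0`, and homogeneity of `f` along `ℕ` absorbs the factor `k ^ e`.
-/

open TensorProduct

/-- The cone generated by `S`: positive linear combinations of elements of `S`. -/
def coneGen (K : Type*) [Field K] [LinearOrder K] [IsStrictOrderedRing K] {V : Type*} [AddCommGroup V]
    [Module K V] (S : Set V) : Set V :=
  { v | ∃ (n : ℕ) (a : Fin (n + 1) → V) (l : Fin (n + 1) → K),
      (∀ i, a i ∈ S) ∧ (∀ i, 0 < l i) ∧ v = ∑ i, l i • a i }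

section ConeGen

variable {K V : Type*} [Field K] [LinearOrder K] [IsStrictOrderedRing K] [AddCommGroup V]
  [Module K V] {S T : Set V}

theorem subset_coneGen : S ⊆ coneGen K S :=
  fun x hx => ⟨0, fun _ => x, fun _ => 1, fun _ => hx, fun _ => one_pos, by simp⟩

theorem coneGen_subset (hST : S ⊆ T) (hadd : ∀ x ∈ T, ∀ y ∈ T, x + y ∈ T)
    (hsmul : ∀ l : K, 0 < l → ∀ x ∈ T, l • x ∈ T) : coneGen K S ⊆ T := by
  rintro _ ⟨n, a, l, ha, hl, rfl⟩
  induction n with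
  | zero => simpa using hsmul _ (hl 0) _ (hST (ha 0))
  | succ n ih =>
    rw [Fin.sum_univ_succ]
    exact hadd _ (hsmul _ (hl 0) _ (hST (ha 0))) _
      (ih (fun i => a i.succ) (fun i => l i.succ) (fun i => ha _) (fun i => hl _))

end ConeGen

theorem AddSubsemigroup.nsmul_mem_of_pos {M : Type*} [AddMonoid M] (A : AddSubsemigroup M)
    {a : M} (ha : a ∈ A) {n : ℕ} (hn : 0 < n) : n • a ∈ A := by
  induction n with
  | zero => omega
  | succ n ih =>
    rcases n.eq_zero_or_pos with rfl | hn
    · simpa using ha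
    · rw [succ_nsmul]
      exact A.add_mem (ih hn) ha

theorem Rat.exists_eq_natCast_div_natCast {l : ℚ} (hl : 0 < l) :
    ∃ r s : ℕ, 0 < r ∧ 0 < s ∧ l = r / s := by
  refine ⟨l.num.toNat, l.den, by have := Rat.num_pos.mpr hl; omega, l.den_pos, ?_⟩
  have hnum : (l.num.toNat : ℚ) = l.num := by
    exact_mod_cast Int.toNat_of_nonneg (Rat.num_nonneg.mpr hl.le)
  rw [hnum, Rat.num_div_den]

namespace RatTensor

variable {M : Type*} [AddCommGroup M]

theorem natCast_smul_one_tmul (n : ℕ) (m : M) :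
    (n : ℚ) • ((1 : ℚ) ⊗ₜ[ℤ] m) = (1 : ℚ) ⊗ₜ[ℤ] (n • m) := by
  rw [tmul_smul, Nat.cast_smul_eq_nsmul]

theorem exists_nsmul_eq_of_one_tmul_eq {a b : M} (h : (1 : ℚ) ⊗ₜ[ℤ] a = (1 : ℚ) ⊗ₜ[ℤ] b) :
    ∃ k : ℕ, 0 < k ∧ k • a = k • b := by
  have : IsLocalizedModule (nonZeroDivisors ℤ) (TensorProduct.mk ℤ ℚ M 1) :=
    (isLocalizedModule_iff_isBaseChange _ ℚ _).mpr (TensorProduct.isBaseChange ℤ M ℚ)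
  obtain ⟨c, hcab⟩ :=
    (IsLocalizedModule.eq_iff_exists (nonZeroDivisors ℤ) (TensorProduct.mk ℤ ℚ M 1)).mp h
  have hc : (c : ℤ) • (a - b) = 0 := by rw [smul_sub, sub_eq_zero]; exact hcab
  refine ⟨(c : ℤ).natAbs, Int.natAbs_pos.mpr (nonZeroDivisors.coe_ne_zero c), ?_⟩
  rw [← sub_eq_zero, ← smul_sub, ← natCast_zsmul, Int.natCast_natAbs]
  rcases abs_choice (c : ℤ) with h | h <;> simp [h, hc]

theorem smul_div_smul_of_smul_eq_one_tmul {x : ℚ ⊗[ℤ] M} {q r s : ℕ} {d : M} (hs : 0 < s)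
    (hx : (q : ℚ) • x = (1 : ℚ) ⊗ₜ[ℤ] d) :
    ((s * q : ℕ) : ℚ) • (((r : ℚ) / s) • x) = (1 : ℚ) ⊗ₜ[ℤ] (r • d) := by
  rw [← natCast_smul_one_tmul, ← hx, smul_smul, smul_smul]
  congr 1
  field_simp
  push_cast
  ring

variable (A : AddSubsemigroup M)

theorem exists_smul_eq_one_tmul_of_mem_coneGen {x : ℚ ⊗[ℤ] M}
    (hx : x ∈ coneGen ℚ ((fun y => (1 : ℚ) ⊗ₜ[ℤ] y) '' A)) :
    ∃ q : ℕ, 0 < q ∧ ∃ d ∈ A, (q : ℚ) • x = (1 : ℚ) ⊗ₜ[ℤ] d := by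
  refine coneGen_subset (T := {x | ∃ q : ℕ, 0 < q ∧ ∃ d ∈ A, (q : ℚ) • x = (1 : ℚ) ⊗ₜ[ℤ] d})
    ?_ ?_ ?_ hx
  · rintro _ ⟨d, hd, rfl⟩
    exact ⟨1, one_pos, d, hd, by simp⟩
  · rintro x ⟨q, hq, d, hd, hx⟩ y ⟨k, hk, c, hc, hy⟩
    refine ⟨q * k, by positivity, k • d + q • c,
      A.add_mem (A.nsmul_mem_of_pos hd hk) (A.nsmul_mem_of_pos hc hq), ?_⟩
    rw [tmul_add, ← natCast_smul_one_tmul, ← natCast_smul_one_tmul, ← hx, ← hy, smul_add,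
      smul_smul, smul_smul, Nat.cast_mul, mul_comm (q : ℚ)]
  · rintro l hl x ⟨q, hq, d, hd, hx⟩
    obtain ⟨r, s, hr, hs, rfl⟩ := Rat.exists_eq_natCast_div_natCast hl
    exact ⟨s * q, by positivity, r • d, A.nsmul_mem_of_pos hd hr,
      smul_div_smul_of_smul_eq_one_tmul hs hx⟩

variable (f : M → ℝ) (e : ℝ)

theorem div_rpow_eq_of_smul_eq_one_tmul
    (hf : ∀ a ∈ A, ∀ n : ℕ, 0 < n → f (n • a) = (n : ℝ) ^ e * f a) {x : ℚ ⊗[ℤ] M}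
    {n m : ℕ} {a b : M} (hn : 0 < n) (hm : 0 < m) (ha : a ∈ A) (hb : b ∈ A)
    (hxa : (n : ℚ) • x = (1 : ℚ) ⊗ₜ[ℤ] a) (hxb : (m : ℚ) • x = (1 : ℚ) ⊗ₜ[ℤ] b) :
    f a / (n : ℝ) ^ e = f b / (m : ℝ) ^ e := by
  have hab : (1 : ℚ) ⊗ₜ[ℤ] (m • a) = (1 : ℚ) ⊗ₜ[ℤ] (n • b) := by
    rw [← natCast_smul_one_tmul, ← natCast_smul_one_tmul, ← hxa, ← hxb, smul_comm]
  obtain ⟨k, hk, hkab⟩ := exists_nsmul_eq_of_one_tmul_eq hab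
  have hfk : f ((k * m) • a) = f ((k * n) • b) := by rw [mul_smul, mul_smul, hkab]
  rw [hf a ha _ (by positivity), hf b hb _ (by positivity), Nat.cast_mul, Nat.cast_mul,
    Real.mul_rpow (by positivity) (by positivity), Real.mul_rpow (by positivity) (by positivity),
    mul_assoc, mul_assoc] at hfk
  rw [div_eq_div_iff (by positivity) (by positivity)]
  linarith [mul_left_cancel₀ (by positivity) hfk]

open Classical in
noncomputable def homogeneousExtension (x : ℚ ⊗[ℤ] M) : ℝ :=
  if h : ∃ p : ℕ × M, 0 < p.1 ∧ p.2 ∈ A ∧ (p.1 : ℚ) • x = (1 : ℚ) ⊗ₜ[ℤ] p.2 then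
    f h.choose.2 / (h.choose.1 : ℝ) ^ e
  else 0

variable {A f e}
variable (hf : ∀ a ∈ A, ∀ n : ℕ, 0 < n → f (n • a) = (n : ℝ) ^ e * f a)
include hf

theorem homogeneousExtension_eq {x : ℚ ⊗[ℤ] M} {q : ℕ} {d : M} (hq : 0 < q) (hd : d ∈ A)
    (hx : (q : ℚ) • x = (1 : ℚ) ⊗ₜ[ℤ] d) : homogeneousExtension A f e x = f d / (q : ℝ) ^ e := by
  have h : ∃ p : ℕ × M, 0 < p.1 ∧ p.2 ∈ A ∧ (p.1 : ℚ) • x = (1 : ℚ) ⊗ₜ[ℤ] p.2 :=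
    ⟨(q, d), hq, hd, hx⟩
  obtain ⟨hq', hd', hx'⟩ := h.choose_spec
  rw [homogeneousExtension, dif_pos h]
  exact div_rpow_eq_of_smul_eq_one_tmul A f e hf hq' hq hd' hd hx' hx

theorem homogeneousExtension_one_tmul {a : M} (ha : a ∈ A) :
    homogeneousExtension A f e ((1 : ℚ) ⊗ₜ[ℤ] a) = f a := by
  simpa using homogeneousExtension_eq hf one_pos ha (one_smul ℚ _)

theorem homogeneousExtension_smul {l : ℚ} (hl : 0 < l) {x : ℚ ⊗[ℤ] M}
    (hx : x ∈ coneGen ℚ ((fun y => (1 : ℚ) ⊗ₜ[ℤ] y) '' A)) :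
    homogeneousExtension A f e (l • x) = (l : ℝ) ^ e * homogeneousExtension A f e x := by
  obtain ⟨q, hq, d, hd, hx⟩ := exists_smul_eq_one_tmul_of_mem_coneGen A hx
  obtain ⟨r, s, hr, hs, rfl⟩ := Rat.exists_eq_natCast_div_natCast hl
  rw [homogeneousExtension_eq hf (by positivity) (A.nsmul_mem_of_pos hd hr)
    (smul_div_smul_of_smul_eq_one_tmul hs hx), homogeneousExtension_eq hf hq hd hx, hf d hd r hr]
  push_cast
  rw [Real.div_rpow (by positivity) (by positivity), Real.mul_rpow (by positivity) (by positivity)]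
  field_simp

theorem eq_homogeneousExtension {g : ℚ ⊗[ℤ] M → ℝ} (hgA : ∀ a ∈ A, g ((1 : ℚ) ⊗ₜ[ℤ] a) = f a)
    (hg : ∀ l : ℚ, 0 < l → ∀ x ∈ coneGen ℚ ((fun y => (1 : ℚ) ⊗ₜ[ℤ] y) '' A),
      g (l • x) = (l : ℝ) ^ e * g x)
    {x : ℚ ⊗[ℤ] M} (hx : x ∈ coneGen ℚ ((fun y => (1 : ℚ) ⊗ₜ[ℤ] y) '' A)) :
    g x = homogeneousExtension A f e x := by
  obtain ⟨q, hq, d, hd, hxd⟩ := exists_smul_eq_one_tmul_of_mem_coneGen A hx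
  have hqx : x = (q : ℚ)⁻¹ • (1 : ℚ) ⊗ₜ[ℤ] d := by
    rw [← hxd, inv_smul_smul₀ (by positivity)]
  rw [homogeneousExtension_eq hf hq hd hxd, hqx,
    hg _ (by positivity) _ (subset_coneGen ⟨d, hd, rfl⟩), hgA d hd, Rat.cast_inv, Rat.cast_natCast, Real.inv_rpow (by positivity), inv_mul_eq_div]

end RatTensor

open RatTensor in
theorem homogeneous_extension_to_coneGen_general (M : Type*) [AddCommGroup M] (A : Set M)
    (hA : ∀ x ∈ A, ∀ y ∈ A, x + y ∈ A) (f : M → ℝ) (e : ℝ)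
    (hf : ∀ a ∈ A, ∀ n : ℕ, 0 < n → f (n • a) = (n : ℝ) ^ e * f a) :
    ∃ g : ℚ ⊗[ℤ] M → ℝ,
      ((∀ a ∈ A, g ((1 : ℚ) ⊗ₜ[ℤ] a) = f a) ∧
        (∀ l : ℚ, 0 < l →
          ∀ x ∈ coneGen ℚ ((fun y : M => ((1 : ℚ) ⊗ₜ[ℤ] y : ℚ ⊗[ℤ] M)) '' A),
            g (l • x) = (l : ℝ) ^ e * g x)) ∧
      ∀ g' : ℚ ⊗[ℤ] M → ℝ,
        ((∀ a ∈ A, g' ((1 : ℚ) ⊗ₜ[ℤ] a) = f a) ∧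
          (∀ l : ℚ, 0 < l →
            ∀ x ∈ coneGen ℚ ((fun y : M => ((1 : ℚ) ⊗ₜ[ℤ] y : ℚ ⊗[ℤ] M)) '' A),
              g' (l • x) = (l : ℝ) ^ e * g' x)) →
        ∀ x ∈ coneGen ℚ ((fun y : M => ((1 : ℚ) ⊗ₜ[ℤ] y : ℚ ⊗[ℤ] M)) '' A), g' x = g x := by
  let S : AddSubsemigroup M := ⟨A, fun ha hb => hA _ ha _ hb⟩
  exact ⟨homogeneousExtension S f e,
    ⟨fun a ha => homogeneousExtension_one_tmul (A := S) hf ha,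
      fun l hl x hx => homogeneousExtension_smul (A := S) hf hl hx⟩,
    fun g' hg' x hx => eq_homogeneousExtension (A := S) hf hg'.1 hg'.2 hx⟩

theorem homogeneous_extension_to_coneGen (M : Type*) [AddCommGroup M] (A : Set M)
    (hA : ∀ x ∈ A, ∀ y ∈ A, x + y ∈ A) (f : M → ℝ) (e : ℝ) (he : 0 < e)
    (hf : ∀ a ∈ A, ∀ n : ℕ, 0 < n → f (n • a) = (n : ℝ) ^ e * f a) :
    ∃ g : ℚ ⊗[ℤ] M → ℝ,
      ((∀ a ∈ A, g ((1 : ℚ) ⊗ₜ[ℤ] a) = f a) ∧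
        (∀ l : ℚ, 0 < l →
          ∀ x ∈ coneGen ℚ ((fun y : M => ((1 : ℚ) ⊗ₜ[ℤ] y : ℚ ⊗[ℤ] M)) '' A),
            g (l • x) = (l : ℝ) ^ e * g x)) ∧
      ∀ g' : ℚ ⊗[ℤ] M → ℝ,
        ((∀ a ∈ A, g' ((1 : ℚ) ⊗ₜ[ℤ] a) = f a) ∧
          (∀ l : ℚ, 0 < l →
            ∀ x ∈ coneGen ℚ ((fun y : M => ((1 : ℚ) ⊗ₜ[ℤ] y : ℚ ⊗[ℤ] M)) '' A),
              g' (l • x) = (l : ℝ) ^ e * g' x)) →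
        ∀ x ∈ coneGen ℚ ((fun y : M => ((1 : ℚ) ⊗ₜ[ℤ] y : ℚ ⊗[ℤ] M)) '' A), g' x = g x :=
  homogeneous_extension_to_coneGen_general M A hA f e hf
end

section
/- Let M be a finitely generated free ℤ-module and K ⊆ M. The following are equivalent: (1) K is a convex lattice, i.e., for every m ≥ 1, ⟨K⟩_ℤ ∩ (1/m)(m∗K) ⊆ K; (2) K = ⟨K⟩_ℤ ∩ Conv_ℝ(K); (3) there exist a ℤ-submodule N of M and a convex set Δ in M ⊗ ℝ with K = N ∩ Δ. -/
/-!
(3) ⇒ (1) is convexity of `Δ` applied to the average of `m` points of `K`, and (2) ⇒ (3) is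
immediate. For (1) ⇒ (2), take a lattice point `x` in the real convex hull of `K`. By
Carathéodory it is a convex combination of affinely independent points of `K` with positive
weights, so these weights are unique. Since `ℝ` is faithfully flat over `ℚ`, `x` is also a
rational affine combination of the same points, so the weights are rational; clearing
denominators gives `m • x ∈ m ∗ K`.
-/

open TensorProduct

/-- The `m`-fold sum `m ∗ K = { x₁ + ⋯ + x_m : xᵢ ∈ K }`. -/
def foldSum {M : Type*} [AddCommMonoid M] (m : ℕ) (K : Set M) : Set M :=
  { x | ∃ f : Fin m → M, (∀ i, f i ∈ K) ∧ x = ∑ i, f i }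

open Set Submodule Finset AffineSubspace

section FoldSum

variable {M N : Type*} [AddCommMonoid M] [AddCommMonoid N] {K K' : Set M} {m p q : ℕ}

theorem add_mem_foldSum {u v : M} (hu : u ∈ foldSum p K) (hv : v ∈ foldSum q K) :
    u + v ∈ foldSum (p + q) K := by
  obtain ⟨f, hf, rfl⟩ := hu
  obtain ⟨g, hg, rfl⟩ := hv
  exact ⟨Fin.append f g, Fin.addCases (by simpa using hf) (by simpa using hg),
    by simp [Fin.sum_univ_add]⟩

theorem nsmul_mem_foldSum {y : M} (hy : y ∈ K) (a : ℕ) : a • y ∈ foldSum a K :=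
  ⟨fun _ => y, fun _ => hy, by simp⟩

theorem sum_nsmul_mem_foldSum {ι : Type*} [Fintype ι] (a : ι → ℕ) {y : ι → M}
    (hy : ∀ i, y i ∈ K) : ∑ i, a i • y i ∈ foldSum (∑ i, a i) K := by
  classical
  induction (univ : Finset ι) using Finset.induction with
  | empty =>
    rw [sum_empty, sum_empty]
    exact ⟨Fin.elim0, fun i => i.elim0, by simp⟩
  | insert j s hj ih =>
    rw [sum_insert hj, sum_insert hj]
    exact add_mem_foldSum (nsmul_mem_foldSum (hy j) (a j)) ih

theorem foldSum_mono (h : K ⊆ K') : foldSum m K ⊆ foldSum m K' :=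
  fun _ ⟨f, hf, hx⟩ => ⟨f, fun i => h (hf i), hx⟩

theorem foldSum_image {F : Type*} [FunLike F M N] [AddMonoidHomClass F M N] (φ : F) :
    foldSum m (φ '' K) = φ '' foldSum m K := by
  ext x
  constructor
  · rintro ⟨f, hf, rfl⟩
    choose g hgK hg using hf
    exact ⟨∑ i, g i, ⟨g, hgK, rfl⟩, by simp [map_sum, hg]⟩
  · rintro ⟨_, ⟨g, hgK, rfl⟩, rfl⟩
    exact ⟨fun i => φ (g i), fun i => mem_image_of_mem φ (hgK i), map_sum φ g univ⟩

end FoldSum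

theorem Convex.mem_of_nsmul_mem_foldSum {𝕜 E : Type*} [Field 𝕜] [LinearOrder 𝕜]
    [IsStrictOrderedRing 𝕜] [AddCommGroup E] [Module 𝕜 E] {s : Set E} (hs : Convex 𝕜 s)
    {m : ℕ} (hm : 0 < m) {x : E} (hx : m • x ∈ foldSum m s) : x ∈ s := by
  obtain ⟨f, hf, hsum⟩ := hx
  have hm' : (m : 𝕜) ≠ 0 := by positivity
  have hx : x = ∑ i, (m : 𝕜)⁻¹ • f i := by
    rw [← smul_sum, ← hsum, ← Nat.cast_smul_eq_nsmul 𝕜, inv_smul_smul₀ hm']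
  rw [hx]
  exact hs.sum_mem (fun _ _ => by positivity) (by simp [hm']) (fun i _ => hf i)

theorem exists_pos_nat_mul_eq_natCast {ι : Type*} [Fintype ι] {w : ι → ℚ} (hw : ∀ i, 0 ≤ w i) :
    ∃ m : ℕ, 0 < m ∧ ∃ a : ι → ℕ, ∀ i, (a i : ℚ) = m * w i := by
  have hden (i : ι) : ∃ c : ℕ, ∏ j, (w j).den = (w i).den * c :=
    dvd_prod_of_mem (fun j => (w j).den) (mem_univ i)
  choose c hc using hden
  refine ⟨∏ i, (w i).den, prod_pos fun i _ => (w i).pos, fun i => c i * (w i).num.toNat,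
    fun i => ?_⟩
  have hnum : ((w i).num.toNat : ℚ) = (w i).den * w i := by
    rw [Rat.den_mul_eq_num]
    exact_mod_cast Int.toNat_of_nonneg (Rat.num_nonneg.2 (hw i))
  push_cast [hc i, hnum]
  ring

theorem exists_nsmul_mem_foldSum_of_mem_convexHull {V : Type*} [AddCommGroup V] [Module ℚ V]
    {S : Set V} {x : V} (hx : x ∈ convexHull ℚ S) : ∃ m : ℕ, 0 < m ∧ m • x ∈ foldSum m S := by
  obtain ⟨ι, _, w, y, hw0, hw1, hyS, rfl⟩ := mem_convexHull_iff_exists_fintype.1 hx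
  obtain ⟨m, hm, a, ha⟩ := exists_pos_nat_mul_eq_natCast hw0
  have hsum : ∑ i, a i = m := by
    exact_mod_cast (by simp only [Nat.cast_sum, ha, ← mul_sum, hw1, mul_one] :
      ((∑ i, a i : ℕ) : ℚ) = m)
  refine ⟨m, hm, ?_⟩
  convert sum_nsmul_mem_foldSum a hyS using 1
  · rw [hsum]
  · rw [smul_sum]
    refine sum_congr rfl fun i _ => ?_
    rw [← Nat.cast_smul_eq_nsmul ℚ, ← Nat.cast_smul_eq_nsmul ℚ, smul_smul, ha]

section ExtensionOfScalars

variable {F L V : Type*} [Field F] [Field L] [Algebra F L] [AddCommGroup V] [Module F V]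

theorem mem_span_of_one_tmul_mem_span {s : Set V} {x : V}
    (h : (1 : L) ⊗ₜ[F] x ∈ span L (TensorProduct.mk F L V 1 '' s)) : x ∈ span F s := by
  rwa [← span_singleton_le_iff_mem, ← baseChange_le_iff (A := L), baseChange_span,
    baseChange_span, image_singleton, span_singleton_le_iff_mem]

theorem mem_vectorSpan_of_one_tmul_mem_vectorSpan {s : Set V} {x : V}
    (h : (1 : L) ⊗ₜ[F] x ∈ vectorSpan L (TensorProduct.mk F L V 1 '' s)) :
    x ∈ vectorSpan F s := by
  have himage : TensorProduct.mk F L V 1 '' s -ᵥ TensorProduct.mk F L V 1 '' s =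
      TensorProduct.mk F L V 1 '' (s -ᵥ s) :=
    (image_image2_distrib fun a b => map_sub (TensorProduct.mk F L V 1) a b).symm
  rw [vectorSpan_def, himage] at h
  exact mem_span_of_one_tmul_mem_span h

theorem mem_affineSpan_of_one_tmul_mem_affineSpan {s : Set V} {x : V}
    (h : (1 : L) ⊗ₜ[F] x ∈ affineSpan L (TensorProduct.mk F L V 1 '' s)) :
    x ∈ affineSpan F s := by
  obtain ⟨p, hp⟩ : s.Nonempty := by
    by_contra hs
    simp [not_nonempty_iff_eq_empty.1 hs, notMem_bot] at h
  rw [← vsub_right_mem_direction_iff_mem (mem_affineSpan F hp), direction_affineSpan]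
  have := (vsub_right_mem_direction_iff_mem
    (mem_affineSpan L (mem_image_of_mem (TensorProduct.mk F L V 1) hp)) _).2 h
  rw [direction_affineSpan] at this
  exact mem_vectorSpan_of_one_tmul_mem_vectorSpan (L := L)
    (by rw [vsub_eq_sub, tmul_sub]; exact this)

end ExtensionOfScalars

theorem mem_convexHull_of_one_tmul_mem_convexHull {L V : Type*} [Field L] [LinearOrder L]
    [IsStrictOrderedRing L] [AddCommGroup V] [Module ℚ V] {S : Set V} {x : V}
    (h : (1 : L) ⊗ₜ[ℚ] x ∈ convexHull L (TensorProduct.mk ℚ L V 1 '' S)) :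
    x ∈ convexHull ℚ S := by
  obtain ⟨ι, _, z, w, hzS, hz, hw0, hw1, hwx⟩ := eq_pos_convex_span_of_mem_convexHull h
  choose y hyS hyz using fun i => hzS (mem_range_self i)
  obtain rfl : (fun i => (1 : L) ⊗ₜ[ℚ] y i) = z := funext hyz
  have hx : x ∈ affineSpan ℚ (range y) := by
    refine mem_affineSpan_of_one_tmul_mem_affineSpan (L := L) (convexHull_subset_affineSpan _ ?_)
    exact mem_convexHull_of_exists_fintype w _ (fun i => (hw0 i).le) hw1
      (fun i => mem_image_of_mem _ (mem_range_self i)) hwx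
  obtain ⟨q, hq1, rfl⟩ := eq_affineCombination_of_mem_affineSpan_of_fintype hx
  rw [affineCombination_eq_linear_combination _ _ _ hq1] at hwx ⊢
  -- the real weights are unique by affine independence, so they are the rational ones
  have hqw : ∀ i, (q i : L) = w i := fun i => hz.eq_of_sum_eq_sum (w₁ := fun i => (q i : L))
    (by rw [hw1]; exact_mod_cast hq1)
    (by simp only [hwx, tmul_sum, tmul_smul, Rat.cast_smul_eq_qsmul]) i (mem_univ i)
  refine (convex_convexHull ℚ S).sum_mem (fun i _ => ?_) hq1
    (fun i _ => subset_convexHull ℚ S (hyS i))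
  exact_mod_cast (hqw i ▸ (hw0 i).le : (0 : L) ≤ q i)

/-- `x ∈ (1/m)(m ∗ K)` is encoded as `m • x ∈ m ∗ K`, avoiding division in `M`. -/
def IsConvexLattice {M : Type*} [AddCommGroup M] (K : Set M) : Prop :=
  ∀ m : ℕ, 0 < m → ∀ x : M, x ∈ span ℤ K → m • x ∈ foldSum m K → x ∈ K

theorem isConvexLattice_inter_preimage {M E 𝕜 : Type*} [AddCommGroup M] [Field 𝕜] [LinearOrder 𝕜]
    [IsStrictOrderedRing 𝕜] [AddCommGroup E] [Module 𝕜 E] (N : Submodule ℤ M) (φ : M →+ E)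
    {Δ : Set E} (hΔ : Convex 𝕜 Δ) : IsConvexLattice ((N : Set M) ∩ φ ⁻¹' Δ) := by
  intro m hm x hx hmx
  refine ⟨span_le.2 inter_subset_left hx, hΔ.mem_of_nsmul_mem_foldSum hm ?_⟩
  rw [← map_nsmul]
  exact foldSum_mono (image_subset_iff.2 inter_subset_right)
    (foldSum_image φ ▸ mem_image_of_mem φ hmx)

theorem exists_nsmul_mem_foldSum_of_one_tmul_mem_convexHull {M L : Type*} [AddCommGroup M]
    [Module.Flat ℤ M] [Field L] [LinearOrder L] [IsStrictOrderedRing L] {K : Set M} {x : M}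
    (hx : (1 : L) ⊗ₜ[ℤ] x ∈ convexHull L (TensorProduct.mk ℤ L M 1 '' K)) :
    ∃ m : ℕ, 0 < m ∧ m • x ∈ foldSum m K := by
  let e := (AlgebraTensorModule.cancelBaseChange ℤ ℚ L L M).symm
  have hq : (1 : ℚ) ⊗ₜ[ℤ] x ∈ convexHull ℚ (TensorProduct.mk ℤ ℚ M 1 '' K) := by
    apply mem_convexHull_of_one_tmul_mem_convexHull (L := L)
    have := mem_image_of_mem e.toLinearMap hx
    rw [LinearMap.image_convexHull, image_image] at this
    rw [image_image]
    simpa [e] using this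
  obtain ⟨m, hm, hmx⟩ := exists_nsmul_mem_foldSum_of_mem_convexHull hq
  rw [foldSum_image] at hmx
  exact ⟨m, hm, (Module.Flat.tensorProduct_mk_injective ℤ M ℚ).mem_set_image.1
    (by rwa [map_nsmul])⟩

theorem IsConvexLattice.eq_inter_preimage_convexHull {M L : Type*} [AddCommGroup M]
    [Module.Flat ℤ M] [Field L] [LinearOrder L] [IsStrictOrderedRing L] {K : Set M}
    (hK : IsConvexLattice K) :
    K = (span ℤ K : Set M) ∩ TensorProduct.mk ℤ L M 1 ⁻¹'
      convexHull L (TensorProduct.mk ℤ L M 1 '' K) := by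
  refine Subset.antisymm (fun x hx => ⟨subset_span hx, subset_convexHull L _ ⟨x, hx, rfl⟩⟩) ?_
  rintro x ⟨hxK, hx⟩
  obtain ⟨m, hm, hmx⟩ := exists_nsmul_mem_foldSum_of_one_tmul_mem_convexHull hx
  exact hK m hm x hxK hmx

theorem convex_lattice_characterizations_general (M : Type*) [AddCommGroup M]
    [Module.Free ℤ M] (K : Set M) :
    ((∀ m : ℕ, 0 < m → ∀ x : M, x ∈ Submodule.span ℤ K → m • x ∈ foldSum m K → x ∈ K) ↔
      K = (Submodule.span ℤ K : Set M) ∩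
        (fun x : M => ((1 : ℝ) ⊗ₜ[ℤ] x : ℝ ⊗[ℤ] M)) ⁻¹'
          (convexHull ℝ ((fun y : M => ((1 : ℝ) ⊗ₜ[ℤ] y : ℝ ⊗[ℤ] M)) '' K))) ∧
    ((K = (Submodule.span ℤ K : Set M) ∩
        (fun x : M => ((1 : ℝ) ⊗ₜ[ℤ] x : ℝ ⊗[ℤ] M)) ⁻¹'
          (convexHull ℝ ((fun y : M => ((1 : ℝ) ⊗ₜ[ℤ] y : ℝ ⊗[ℤ] M)) '' K))) ↔
      ∃ (N : Submodule ℤ M) (Δ : Set (ℝ ⊗[ℤ] M)), Convex ℝ Δ ∧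
        K = (N : Set M) ∩ (fun x : M => ((1 : ℝ) ⊗ₜ[ℤ] x : ℝ ⊗[ℤ] M)) ⁻¹' Δ) := by
  have hconvex (N : Submodule ℤ M) (Δ : Set (ℝ ⊗[ℤ] M)) (hΔ : Convex ℝ Δ) :
      IsConvexLattice ((N : Set M) ∩ TensorProduct.mk ℤ ℝ M 1 ⁻¹' Δ) :=
    isConvexLattice_inter_preimage N (TensorProduct.mk ℤ ℝ M 1).toAddMonoidHom hΔ
  refine ⟨⟨IsConvexLattice.eq_inter_preimage_convexHull, fun h => ?_⟩,
    ⟨fun h => ⟨_, _, convex_convexHull ℝ _, h⟩, ?_⟩⟩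
  · rw [h]
    exact hconvex _ _ (convex_convexHull ℝ _)
  · rintro ⟨N, Δ, hΔ, rfl⟩
    exact (hconvex N Δ hΔ).eq_inter_preimage_convexHull

theorem convex_lattice_characterizations (M : Type*) [AddCommGroup M]
    [Module.Free ℤ M] [Module.Finite ℤ M] (K : Set M) :
    ((∀ m : ℕ, 0 < m → ∀ x : M, x ∈ Submodule.span ℤ K → m • x ∈ foldSum m K → x ∈ K) ↔
      K = (Submodule.span ℤ K : Set M) ∩
        (fun x : M => ((1 : ℝ) ⊗ₜ[ℤ] x : ℝ ⊗[ℤ] M)) ⁻¹'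
          (convexHull ℝ ((fun y : M => ((1 : ℝ) ⊗ₜ[ℤ] y : ℝ ⊗[ℤ] M)) '' K))) ∧
    ((K = (Submodule.span ℤ K : Set M) ∩
        (fun x : M => ((1 : ℝ) ⊗ₜ[ℤ] x : ℝ ⊗[ℤ] M)) ⁻¹'
          (convexHull ℝ ((fun y : M => ((1 : ℝ) ⊗ₜ[ℤ] y : ℝ ⊗[ℤ] M)) '' K))) ↔
      ∃ (N : Submodule ℤ M) (Δ : Set (ℝ ⊗[ℤ] M)), Convex ℝ Δ ∧
        K = (N : Set M) ∩ (fun x : M => ((1 : ℝ) ⊗ₜ[ℤ] x : ℝ ⊗[ℤ] M)) ⁻¹' Δ) :=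
  convex_lattice_characterizations_general M K
end
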